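/- Let K be a commutative ring and v, w : ℕ → K, and let 0 denote the identically-zero weight function. Define A^{v,w}(n,k) by the recurrence A^{v,w}(n,k) = A^{v,w}(n-1,k-1) + (v_{n-1} + w_k)·A^{v,w}(n-1,k) with standard initial conditions. Then for all n, k: A^{v,w}(n,k) = ∑_{j=k}^{n} A^{v,0}(n,j) · A^{0,w}(j,k). -/

import Mathlib

/-! Row by row, `A^{v,w}` is obtained by applying the operator `x ↦ x(· - 1) + (vₙ + w_·) x`,
which is the sum of the operator `x ↦ x(· - 1) + vₙ x` defining `A^{v,0}` and the diagonal
part `x ↦ w_· x`. Summing a row of `A^{v,0}` against the columns of `A^{0,w}` turns the shift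
of `A^{v,0}` into the row step of `A^{0,w}`, so the sums satisfy the recurrence of `A^{v,w}`. -/

open Finset

/-- The generalized two-weight array `A^{v,w}(n,k)`. -/
def A {K : Type*} [CommRing K] (v w : ℕ → K) : ℕ → ℕ → K
  | 0, 0 => 1
  | 0, _ + 1 => 0
  | n + 1, 0 => (v n + w 0) * A v w n 0
  | n + 1, k + 1 => A v w n k + (v n + w (k + 1)) * A v w n (k + 1)

section

variable {K : Type*} [CommRing K] (v w : ℕ → K)

@[simp] lemma A_zero_zero : A v w 0 0 = 1 := rfl

@[simp] lemma A_zero_succ (k : ℕ) : A v w 0 (k + 1) = 0 := rfl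

lemma A_succ_zero (n : ℕ) : A v w (n + 1) 0 = (v n + w 0) * A v w n 0 := rfl

lemma A_succ_succ (n k : ℕ) :
    A v w (n + 1) (k + 1) = A v w n k + (v n + w (k + 1)) * A v w n (k + 1) := rfl

lemma A_eq_zero_of_lt {n k : ℕ} (h : n < k) : A v w n k = 0 := by
  induction n generalizing k with
  | zero => obtain ⟨k, rfl⟩ := Nat.exists_eq_succ_of_ne_zero h.ne'; rfl
  | succ n ih =>
    obtain ⟨k, rfl⟩ := Nat.exists_eq_succ_of_ne_zero (Nat.zero_lt_of_lt h).ne'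
    rw [A_succ_succ, ih (by omega), ih (by omega), mul_zero, add_zero]

lemma sum_range_A_succ_mul (n : ℕ) (b : ℕ → K) :
    ∑ j ∈ range (n + 2), A v (fun _ => 0) (n + 1) j * b j =
      ∑ j ∈ range (n + 1), A v (fun _ => 0) n j * b (j + 1) +
        v n * ∑ j ∈ range (n + 1), A v (fun _ => 0) n j * b j := by
  have hshift : ∑ j ∈ range (n + 1), A v (fun _ => 0) n (j + 1) * b (j + 1) +
      A v (fun _ => 0) n 0 * b 0 = ∑ j ∈ range (n + 1), A v (fun _ => 0) n j * b j := by
    rw [← sum_range_succ' (fun j => A v (fun _ => 0) n j * b j), sum_range_succ,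
      A_eq_zero_of_lt _ _ n.lt_succ_self, zero_mul, add_zero]
  rw [sum_range_succ', ← hshift]
  simp only [A_succ_succ, A_succ_zero, add_zero, add_mul, sum_add_distrib, mul_add, mul_sum,
    mul_assoc, add_assoc]

lemma A_eq_sum_range (n k : ℕ) :
    A v w n k = ∑ j ∈ range (n + 1), A v (fun _ => 0) n j * A (fun _ => 0) w j k := by
  induction n generalizing k with
  | zero => cases k <;> simp
  | succ n ih =>
    rw [sum_range_A_succ_mul]
    cases k with
    | zero =>
      simp only [A_succ_zero, zero_add, mul_left_comm _ (w 0), ← mul_sum, ← ih]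
      ring
    | succ k =>
      simp only [A_succ_succ, zero_add, mul_add, sum_add_distrib, mul_left_comm _ (w (k + 1)),
        ← mul_sum, ← ih]
      ring

end

theorem stmt_2 {K : Type*} [CommRing K] (v w : ℕ → K) (n k : ℕ) :
    A v w n k = ∑ j ∈ Finset.Icc k n, A v (fun _ => 0) n j * A (fun _ => 0) w j k := by
  rw [A_eq_sum_range]
  refine (sum_subset (fun j hj => ?_) fun j hjn hj => ?_).symm
  · simp only [mem_Icc, mem_range] at hj ⊢
    omega
  · simp only [mem_Icc, mem_range] at hj hjn
    rw [A_eq_zero_of_lt (fun _ => 0) w (by omega : j < k), mul_zero]
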